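/- Let d ≥ 1, σ > 0 and α > 0, let ‖·‖ be the ℓ∞ norm on ℤ^d, and let (g_z)_{z∈ℤ^d} be i.i.d. Gaussian random variables with mean 0 and variance σ². Let Π_U = Σ_{z∈ℤ^d∖U} δ_{‖z‖^α + g_z} for U ⊆ ℤ^d. Then for all finite S, T ⊆ ℤ^d with |S| = |T|, the laws of Π_S and Π_T are mutually absolutely continuous. -/

import Mathlib

/-!
Exchanging a point `a ∈ U` for a point `b ∉ U` changes the configuration in one atom only: both
`Π_U` and `Π_{U - a + b}` are `Π_{U ∪ {b}}` plus one extra point, `‖b‖^α + g_b` resp.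
`‖a‖^α + g_a`, which is independent of `Π_{U ∪ {b}}`. These two points are Gaussian with the same
variance, so their laws are mutually absolutely continuous, and hence so are the laws of the two
configurations. Any two finite sets of the same cardinality are joined by a chain of exchanges.
-/

open MeasureTheory ProbabilityTheory Filter Set

/-- The configuration `Π_U = Σ_{z ∈ ℤ^d ∖ U} δ_{‖z‖^α + g(z)}` as a Borel measure on `ℝ`,
where `‖·‖` is the `ℓ∞` norm on `ℤ^d = (Fin d → ℤ)`. -/
noncomputable def latticeConfig {d : ℕ} (α : ℝ) (g : (Fin d → ℤ) → ℝ) (U : Set (Fin d → ℤ)) :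
    Measure ℝ :=
  Measure.sum (fun z : {z : Fin d → ℤ // z ∉ U} => Measure.dirac (‖z.1‖ ^ α + g z.1))

open scoped NNReal

theorem Finset.reflTransGen_exchange_of_card_eq {ι : Type*} [DecidableEq ι] {S T : Finset ι}
    (h : S.card = T.card) :
    Relation.ReflTransGen (fun A B : Finset ι => ∃ a ∈ A, ∃ b ∉ A, B = insert b (A.erase a))
      S T := by
  induction hn : (S \ T).card generalizing S with
  | zero =>
    have hST : S ⊆ T := Finset.sdiff_eq_empty_iff_subset.mp (Finset.card_eq_zero.mp hn)
    rw [Finset.eq_of_subset_of_card_le hST h.ge]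
  | succ n ih =>
    obtain ⟨a, ha⟩ : (S \ T).Nonempty := Finset.card_pos.mp (by omega)
    obtain ⟨b, hb⟩ : (T \ S).Nonempty :=
      Finset.card_pos.mp (by rw [← Finset.card_sdiff_comm h]; omega)
    rw [Finset.mem_sdiff] at ha hb
    have hb' : b ∉ S.erase a := fun hbS => hb.2 (Finset.mem_of_mem_erase hbS)
    refine .head ⟨a, ha.1, b, hb.2, rfl⟩ (ih ?_ ?_)
    · rw [Finset.card_insert_of_notMem hb', Finset.card_erase_add_one ha.1, h]
    · have hdiff : insert b (S.erase a) \ T = (S \ T).erase a := by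
        ext z
        by_cases hz : z = b <;> simp [hz, hb.1, and_assoc]
      rw [hdiff, Finset.card_erase_of_mem (Finset.mem_sdiff.mpr ha), hn, Nat.add_sub_cancel]

theorem measurable_measure_sum_dirac {ι β γ : Type*} [Countable ι] [MeasurableSpace β]
    [MeasurableSpace γ] {f : ι → β → γ} (hf : ∀ i, Measurable (f i)) :
    Measurable fun x => Measure.sum fun i => Measure.dirac (f i x) := by
  refine Measure.measurable_of_measurable_coe _ fun s hs => ?_
  simp only [Measure.sum_apply _ hs, Measure.dirac_apply' _ hs]
  exact Measurable.tsum fun i => (measurable_one.indicator hs).comp (hf i)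

namespace ProbabilityTheory

variable {Ω : Type*} [MeasurableSpace Ω] {P : Measure Ω}

theorem iIndepFun.indepFun_restrict_compl {ι β : Type*} [MeasurableSpace β] {g : ι → Ω → β}
    (hg : ∀ i, Measurable (g i)) (h : iIndepFun g P)
    {W : Set ι} {c : ι} (hc : c ∈ W) :
    IndepFun (fun ω (i : {i // i ∉ W}) => g i ω) (g c) P := by
  have hindep := indep_iSup_of_disjoint (fun i => (hg i).comap_le) h
    (S := Wᶜ) (T := {c}) (by simpa using hc)
  rw [iSup_singleton] at hindep
  refine indep_of_indep_of_le_left hindep ?_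
  rw [MeasurableSpace.pi, MeasurableSpace.comap_iSup]
  exact iSup_le fun i => MeasurableSpace.comap_comp.le.trans
    (le_iSup₂ (f := fun i (_ : i ∈ Wᶜ) => MeasurableSpace.comap (g i) inferInstance) i.1 i.2)

theorem IndepFun.map_absolutelyContinuous_map [IsFiniteMeasure P] {E F G : Type*}
    [MeasurableSpace E] [MeasurableSpace F] [MeasurableSpace G] {X : Ω → E} {Y Y' : Ω → F}
    (hX : Measurable X) (hY : Measurable Y) (hY' : Measurable Y')
    (hXY : IndepFun X Y P) (hXY' : IndepFun X Y' P) (hlaw : P.map Y ≪ P.map Y')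
    {Φ : E × F → G} (hΦ : Measurable Φ) :
    P.map (fun ω => Φ (X ω, Y ω)) ≪ P.map (fun ω => Φ (X ω, Y' ω)) := by
  have hmap : ∀ {Z : Ω → F}, Measurable Z → IndepFun X Z P →
      P.map (fun ω => Φ (X ω, Z ω)) = ((P.map X).prod (P.map Z)).map Φ := fun hZ hXZ => by
    rw [← (indepFun_iff_map_prod_eq_prod_map_map hX.aemeasurable hZ.aemeasurable).mp hXZ,
      Measure.map_map hΦ (hX.prodMk hZ)]
    rfl
  rw [hmap hY hXY, hmap hY' hXY']
  exact (Measure.AbsolutelyContinuous.rfl.prod hlaw).map hΦ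

end ProbabilityTheory

theorem gaussianReal_absolutelyContinuous_gaussianReal (μ μ' : ℝ) {v : ℝ≥0} (hv : v ≠ 0) :
    gaussianReal μ v ≪ gaussianReal μ' v :=
  (gaussianReal_absolutelyContinuous μ hv).trans (gaussianReal_absolutelyContinuous' μ' hv)

section LatticeConfig

variable {d : ℕ} {α : ℝ}

theorem latticeConfig_eq_add_dirac (f : (Fin d → ℤ) → ℝ) {U : Set (Fin d → ℤ)}
    {c : Fin d → ℤ} (hc : c ∉ U) :
    latticeConfig α f U = latticeConfig α f (insert c U) + Measure.dirac (‖c‖ ^ α + f c) := by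
  ext s hs
  let F : (Fin d → ℤ) → ENNReal := fun z => Measure.dirac (‖z‖ ^ α + f z) s
  have hsub : ∀ V : Set (Fin d → ℤ), ∑' z : {z // z ∉ V}, F z = ∑' z, Vᶜ.indicator F z :=
    fun V => tsum_subtype Vᶜ F
  simp only [latticeConfig, Measure.add_apply, Measure.sum_apply _ hs]
  rw [hsub, hsub, ENNReal.tsum_eq_add_tsum_ite c, indicator_of_mem hc, add_comm]
  congr 2 with z
  by_cases hz : z = c <;> by_cases hzU : z ∈ U <;> simp [hz, hzU]

variable {Ω : Type*} [MeasurableSpace Ω] {P : Measure Ω} [IsFiniteMeasure P]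
  {g : (Fin d → ℤ) → Ω → ℝ}

theorem map_latticeConfig_absolutelyContinuous_exchange (hmeas : ∀ z, Measurable (g z))
    (hindep : iIndepFun g P) {U : Set (Fin d → ℤ)} {a b : Fin d → ℤ} (ha : a ∈ U) (hb : b ∉ U)
    (hlaw : P.map (fun ω => ‖b‖ ^ α + g b ω) ≪ P.map (fun ω => ‖a‖ ^ α + g a ω)) :
    P.map (fun ω => latticeConfig α (fun z => g z ω) U) ≪
      P.map (fun ω => latticeConfig α (fun z => g z ω) (insert b (U \ {a}))) := by
  set W := insert b U
  let X : Ω → {z // z ∉ W} → ℝ := fun ω z => g z ω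
  let Φ : ({z // z ∉ W} → ℝ) × ℝ → Measure ℝ := fun p =>
    Measure.sum (fun z => Measure.dirac (‖z.1‖ ^ α + p.1 z)) + Measure.dirac p.2
  have hX : Measurable X := measurable_pi_lambda _ fun z => hmeas z.1
  have hΦ : Measurable Φ :=
    (measurable_measure_sum_dirac fun z =>
      measurable_const.add ((measurable_pi_apply z).comp measurable_fst)).add
      (Measure.measurable_dirac.comp measurable_snd)
  have hpoint : ∀ c ∈ W, Measurable (fun ω => ‖c‖ ^ α + g c ω) ∧
      IndepFun X (fun ω => ‖c‖ ^ α + g c ω) P := fun c hc =>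
    ⟨measurable_const.add (hmeas c),
      (hindep.indepFun_restrict_compl hmeas hc).comp measurable_id (measurable_const_add _)⟩
  have hsplit : ∀ V c, c ∉ V → insert c V = W →
      (fun ω => latticeConfig α (fun z => g z ω) V) = fun ω => Φ (X ω, ‖c‖ ^ α + g c ω) :=
    fun V c hc hV => funext fun ω => by rw [latticeConfig_eq_add_dirac _ hc, hV]; rfl
  have hW : insert a (insert b (U \ {a})) = W := by
    rw [insert_comm, insert_sdiff_singleton, insert_eq_of_mem ha]
  rw [hsplit U b hb rfl, hsplit _ a (by simp [ne_of_mem_of_not_mem ha hb]) hW]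
  obtain ⟨hYb, hXb⟩ := hpoint b (mem_insert b U)
  obtain ⟨hYa, hXa⟩ := hpoint a (mem_insert_of_mem b ha)
  exact hXb.map_absolutelyContinuous_map hX hYb hYa hXa hlaw hΦ

end LatticeConfig

theorem equal_cardinality_deletions_equivalent_general
    (d : ℕ) (σ : ℝ) (hσ : 0 < σ) (α : ℝ)
    {Ω : Type*} [MeasurableSpace Ω] (P : Measure Ω) [IsProbabilityMeasure P]
    (g : (Fin d → ℤ) → Ω → ℝ) (hmeas : ∀ z, Measurable (g z))
    (hindep : iIndepFun g P)
    (hlaw : ∀ z, P.map (g z) = gaussianReal 0 ⟨σ ^ 2, sq_nonneg σ⟩)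
    (S T : Finset (Fin d → ℤ)) (hST : S.card = T.card) :
    P.map (fun ω => latticeConfig α (fun z => g z ω) (↑S : Set (Fin d → ℤ))) ≪
      P.map (fun ω => latticeConfig α (fun z => g z ω) (↑T : Set (Fin d → ℤ))) ∧
    P.map (fun ω => latticeConfig α (fun z => g z ω) (↑T : Set (Fin d → ℤ))) ≪
      P.map (fun ω => latticeConfig α (fun z => g z ω) (↑S : Set (Fin d → ℤ))) := by
  have hv : (⟨σ ^ 2, sq_nonneg σ⟩ : ℝ≥0) ≠ 0 := fun h =>
    (pow_pos hσ 2).ne' (congrArg NNReal.toReal h)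
  have hpoint : ∀ a b : Fin d → ℤ,
      P.map (fun ω => ‖b‖ ^ α + g b ω) ≪ P.map (fun ω => ‖a‖ ^ α + g a ω) := fun a b => by
    simp only [fun c => (gaussianReal_const_add ⟨(hmeas c).aemeasurable, hlaw c⟩ (‖c‖ ^ α)).map_eq]
    exact gaussianReal_absolutelyContinuous_gaussianReal _ _ hv
  have hequiv : ∀ A B : Finset (Fin d → ℤ), A.card = B.card →
      P.map (fun ω => latticeConfig α (fun z => g z ω) A) ≪
        P.map (fun ω => latticeConfig α (fun z => g z ω) B) := fun A B hAB => by
    have hchain := Finset.reflTransGen_exchange_of_card_eq hAB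
    clear hAB
    induction hchain with
    | refl => exact .rfl
    | tail _ hstep ih =>
      obtain ⟨a, ha, b, hb, rfl⟩ := hstep
      rw [Finset.coe_insert, Finset.coe_erase]
      exact ih.trans (map_latticeConfig_absolutelyContinuous_exchange hmeas hindep ha hb
        (hpoint a b))
  exact ⟨hequiv S T hST, hequiv T S hST.symm⟩

/-- For `Π = {‖z‖^α + g_z}_{z ∈ ℤ^d}` with i.i.d. `N(0, σ²)` noise, deleting two finite sets
of the same cardinality yields mutually absolutely continuous laws: only the number of
deleted points, not their identity, can be detected. -/
theorem equal_cardinality_deletions_equivalent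
    (d : ℕ) (hd : 1 ≤ d) (σ : ℝ) (hσ : 0 < σ) (α : ℝ) (hα : 0 < α)
    {Ω : Type*} [MeasurableSpace Ω] (P : Measure Ω) [IsProbabilityMeasure P]
    (g : (Fin d → ℤ) → Ω → ℝ) (hmeas : ∀ z, Measurable (g z))
    (hindep : iIndepFun g P)
    (hlaw : ∀ z, P.map (g z) = gaussianReal 0 ⟨σ ^ 2, sq_nonneg σ⟩)
    (S T : Finset (Fin d → ℤ)) (hST : S.card = T.card) :
    P.map (fun ω => latticeConfig α (fun z => g z ω) (↑S : Set (Fin d → ℤ))) ≪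
      P.map (fun ω => latticeConfig α (fun z => g z ω) (↑T : Set (Fin d → ℤ))) ∧
    P.map (fun ω => latticeConfig α (fun z => g z ω) (↑T : Set (Fin d → ℤ))) ≪
      P.map (fun ω => latticeConfig α (fun z => g z ω) (↑S : Set (Fin d → ℤ))) :=
  equal_cardinality_deletions_equivalent_general d σ hσ α P g hmeas hindep hlaw S T hST
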